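/- (Corollary of Theorem 1) Assume the label marginal is uniform, i.e. P_Y(y) = 1/M for every y, where M is the cardinality of 𝒴. Then for every function f : 𝒳 × 𝒴 → ℝ, the softmax cross-entropy loss satisfies L(f) ≥ log M − I(X;Y); equivalently, log M − L(f) is a lower bound on the mutual information I(X;Y) for every f. -/
import Mathlib


open Finset Real

lemma gibbs_aux {ι : Type*} [Fintype ι] (p q : ι → ℝ)
    (hp : ∀ i, 0 < p i) (hq : ∀ i, 0 < q i) (hs : ∑ i, q i ≤ ∑ i, p i) :
    0 ≤ ∑ i, p i * Real.log (p i / q i) := by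
  have h : ∀ i, p i - q i ≤ p i * Real.log (p i / q i) := by
    intro i
    have hx : 0 < p i / q i := div_pos (hp i) (hq i)
    have h1 := Real.one_sub_inv_le_log_of_pos hx
    have h2 : p i * (1 - (p i / q i)⁻¹) ≤ p i * Real.log (p i / q i) :=
      mul_le_mul_of_nonneg_left h1 (hp i).le
    have h3 : p i * (1 - (p i / q i)⁻¹) = p i - q i := by
      rw [inv_div, mul_sub, mul_one, mul_div_cancel₀ _ (hp i).ne']
    linarith
  calc (0:ℝ) ≤ ∑ i, (p i - q i) := by
        rw [Finset.sum_sub_distrib]; linarith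
    _ ≤ _ := Finset.sum_le_sum (fun i _ => h i)

/-- Corollary of Theorem 1: under a uniform label marginal, for every
`f : 𝒳 × 𝒴 → ℝ` the softmax cross-entropy loss satisfies
`L(f) ≥ log M − I(X;Y)`. -/
theorem softmax_cross_entropy_ge_logM_sub_mi
    {𝒳 𝒴 : Type*} [Fintype 𝒳] [Fintype 𝒴] [Nonempty 𝒳] [Nonempty 𝒴]
    (P : 𝒳 × 𝒴 → ℝ) (hPpos : ∀ z, 0 < P z) (hPsum : ∑ z, P z = 1)
    (hUnif : ∀ y, (∑ x', P (x', y)) = 1 / (Fintype.card 𝒴 : ℝ))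
    (f : 𝒳 × 𝒴 → ℝ) :
    -(∑ x, ∑ y, P (x, y) *
        (f (x, y) - Real.log (∑ y', Real.exp (f (x, y')))))
      ≥ Real.log (Fintype.card 𝒴)
        - (∑ x, ∑ y, P (x, y) *
            Real.log (P (x, y) / ((∑ y', P (x, y')) * (∑ x', P (x', y))))) := by
  have hM : (0:ℝ) < (Fintype.card 𝒴 : ℝ) := by
    exact_mod_cast Fintype.card_pos
  have hPX : ∀ x, 0 < ∑ y', P (x, y') :=
    fun x => Finset.sum_pos (fun y _ => hPpos _) (by simp)
  have hS : ∀ x, 0 < ∑ y', Real.exp (f (x, y')) :=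
    fun x => Finset.sum_pos (fun y _ => Real.exp_pos _) (by simp)
  set q : 𝒳 × 𝒴 → ℝ := fun z =>
    (∑ y', P (z.1, y')) * Real.exp (f z) / (∑ y', Real.exp (f (z.1, y'))) with hq_def
  have hqpos : ∀ z, 0 < q z := fun z =>
    div_pos (mul_pos (hPX z.1) (Real.exp_pos _)) (hS z.1)
  have hqsum : ∑ z, q z = 1 := by
    rw [Fintype.sum_prod_type]
    have : ∀ x : 𝒳, ∑ y, q (x, y) = ∑ y', P (x, y') := by
      intro x
      simp only [hq_def]
      rw [← Finset.sum_div, ← Finset.mul_sum]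
      field_simp
    simp only [this]
    rw [← Fintype.sum_prod_type]
    exact hPsum
  have hKL : 0 ≤ ∑ z, P z * Real.log (P z / q z) :=
    gibbs_aux P q hPpos hqpos (by rw [hqsum, hPsum])
  -- Expand the KL: log (P z / q z) = log P − log PX − f + log S
  have hKL' : 0 ≤ ∑ x, ∑ y, P (x, y) *
      (Real.log (P (x, y)) - Real.log (∑ y', P (x, y')) - f (x, y)
        + Real.log (∑ y', Real.exp (f (x, y')))) := by
    rw [Fintype.sum_prod_type] at hKL
    refine le_of_le_of_eq hKL (Finset.sum_congr rfl fun x _ =>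
      Finset.sum_congr rfl fun y _ => ?_)
    congr 1
    rw [hq_def]
    rw [Real.log_div (hPpos (x,y)).ne' (hqpos (x,y)).ne']
    rw [Real.log_div (mul_pos (hPX x) (Real.exp_pos _)).ne' (hS x).ne']
    rw [Real.log_mul (hPX x).ne' (Real.exp_pos _).ne', Real.log_exp]
    ring
  -- Expand the mutual information term
  have hMI : ∀ x y, P (x, y) *
      Real.log (P (x, y) / ((∑ y', P (x, y')) * (∑ x', P (x', y))))
      = P (x, y) * (Real.log (P (x, y)) - Real.log (∑ y', P (x, y'))
          + Real.log (Fintype.card 𝒴)) := by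
    intro x y
    rw [hUnif y]
    congr 1
    rw [Real.log_div (hPpos (x,y)).ne'
        (mul_pos (hPX x) (by positivity : (0:ℝ) < 1 / (Fintype.card 𝒴:ℝ))).ne',
      Real.log_mul (hPX x).ne' (by positivity : (1:ℝ)/(Fintype.card 𝒴:ℝ) ≠ 0),
      Real.log_div one_ne_zero hM.ne', Real.log_one]
    ring
  have hsum1 : ∑ x, ∑ y, P (x, y) = 1 := by
    rw [← Fintype.sum_prod_type]; exact hPsum
  -- Now pure algebra
  simp only [hMI, mul_add, mul_sub, Finset.sum_add_distrib, Finset.sum_sub_distrib,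
    ← Finset.sum_mul] at hKL' ⊢
  rw [hsum1, one_mul]
  linarith
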